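/- Let R be a rewrite system over F, t a term all of whose variables are abstraction variables, and α a ground normalized substitution with Var(t) ⊆ Dom(α). For every innermost rewrite chain αt →^inn_{p_1, l_1→r_1} t_1 →^inn_{p_2, l_2→r_2} t_2 →^inn … →^inn_{p_n, l_n→r_n} t_n and every k ∈ {1,…,n}, the function symbol occurring at any redex position of t_k is either a function symbol occurring in t or a function symbol occurring in one of r_1,…,r_k. -/
import Mathlib


namespace TRS

inductive Term (F V : Type*) where
  | var : V → Term F V
  | app : F → List (Term F V) → Term F V

namespace Term

variable {F V : Type*}

mutual
  def subst (σ : V → Term F V) : Term F V → Term F V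
    | .var x => σ x
    | .app f ts => .app f (substList σ ts)

  def substList (σ : V → Term F V) : List (Term F V) → List (Term F V)
    | [] => []
    | t :: ts => subst σ t :: substList σ ts
end

mutual
  def vars : Term F V → Set V
    | .var x => {x}
    | .app _ ts => varsList ts

  def varsList : List (Term F V) → Set V
    | [] => ∅
    | t :: ts => vars t ∪ varsList ts
end

def IsGround (t : Term F V) : Prop := vars t = ∅

def top : Term F V → Option F
  | .var _ => none
  | .app f _ => some f

def subtermAt : List ℕ → Term F V → Option (Term F V)
  | [], t => some t
  | _ :: _, .var _ => none
  | i :: p, .app _ ts =>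
    match ts[i]? with
    | none => none
    | some u => subtermAt p u

def replaceAt : List ℕ → Term F V → Term F V → Option (Term F V)
  | [], _, u => some u
  | _ :: _, .var _, _ => none
  | i :: p, .app f ts, u =>
    match ts[i]? with
    | none => none
    | some ti =>
      match replaceAt p ti u with
      | none => none
      | some ti' => some (.app f (ts.set i ti'))

inductive WF (arity : F → ℕ) : Term F V → Prop
  | var (x : V) : WF arity (.var x)
  | app (f : F) (ts : List (Term F V)) :
      ts.length = arity f → (∀ t ∈ ts, WF arity t) → WF arity (.app f ts)

inductive Occurs (f : F) : Term F V → Prop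
  | head (ts : List (Term F V)) : Occurs f (.app f ts)
  | arg {g : F} {ts : List (Term F V)} {t : Term F V} :
      t ∈ ts → Occurs f t → Occurs f (.app g ts)

end Term

open Term

structure Rule (F V : Type*) where
  lhs : Term F V
  rhs : Term F V

variable {F V : Type*}

/-- The domain of a substitution. -/
def SDom (σ : V → Term F V) : Set V := {x | σ x ≠ Term.var x}

/-- The range (variables) of a substitution. -/
def SRan (σ : V → Term F V) : Set V := ⋃ x ∈ SDom σ, vars (σ x)

/-- A ground substitution maps every variable of its domain to a ground term. -/
def GroundSubst (σ : V → Term F V) : Prop := ∀ x ∈ SDom σ, IsGround (σ x)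

/-- `R` is a rewrite system: no left-hand side is a variable, and
`Var(rhs) ⊆ Var(lhs)` for every rule. -/
def IsRS (R : List (Rule F V)) : Prop :=
  ∀ ρ ∈ R, (∀ x : V, ρ.lhs ≠ Term.var x) ∧ vars ρ.rhs ⊆ vars ρ.lhs

/-- Rewriting at position `p` with the rule `l → r`. -/
def RewriteAtWith (l r : Term F V) (p : List ℕ) (s t : Term F V) : Prop :=
  ∃ τ : V → Term F V, subtermAt p s = some (subst τ l) ∧ replaceAt p s (subst τ r) = some t

/-- Rewriting at position `p` with some rule of `R`. -/
def RewriteAt (R : List (Rule F V)) (p : List ℕ) (s t : Term F V) : Prop :=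
  ∃ ρ ∈ R, RewriteAtWith ρ.lhs ρ.rhs p s t

/-- The rewriting relation induced by `R`. -/
def Rewrite (R : List (Rule F V)) (s t : Term F V) : Prop :=
  ∃ p, RewriteAt R p s t

def ReducibleAt (R : List (Rule F V)) (s : Term F V) (p : List ℕ) : Prop :=
  ∃ t, RewriteAt R p s t

def Reducible (R : List (Rule F V)) (s : Term F V) : Prop :=
  ∃ t, Rewrite R s t

def NormalForm (R : List (Rule F V)) (s : Term F V) : Prop := ¬ Reducible R s

/-- `n` is a normal form of `s`. -/
def IsNormalFormOf (R : List (Rule F V)) (s n : Term F V) : Prop :=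
  Relation.ReflTransGen (Rewrite R) s n ∧ NormalForm R n

/-- `q` is strictly below `p` (`p` is a strict prefix of `q`). -/
def StrictBelow (p q : List ℕ) : Prop := p <+: q ∧ p ≠ q

/-- Innermost rewrite step at position `p`. -/
def InnAt (R : List (Rule F V)) (p : List ℕ) (s t : Term F V) : Prop :=
  RewriteAt R p s t ∧ ∀ q, StrictBelow p q → ¬ ReducibleAt R s q

def InnStep (R : List (Rule F V)) (s t : Term F V) : Prop := ∃ p, InnAt R p s t

/-- Outermost rewrite step at position `p`. -/
def OutAt (R : List (Rule F V)) (p : List ℕ) (s t : Term F V) : Prop :=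
  RewriteAt R p s t ∧ ∀ q, StrictBelow q p → ¬ ReducibleAt R s q

def OutStep (R : List (Rule F V)) (s t : Term F V) : Prop := ∃ p, OutAt R p s t

/-- Innermost rewrite step at position `p` with rule `l → r`. -/
def InnAtWith (R : List (Rule F V)) (l r : Term F V) (p : List ℕ) (s t : Term F V) : Prop :=
  RewriteAtWith l r p s t ∧ ∀ q, StrictBelow p q → ¬ ReducibleAt R s q

/-- Outermost rewrite step at position `p` with rule `l → r`. -/
def OutAtWith (R : List (Rule F V)) (l r : Term F V) (p : List ℕ) (s t : Term F V) : Prop :=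
  RewriteAtWith l r p s t ∧ ∀ q, StrictBelow q p → ¬ ReducibleAt R s q

/-- No infinite innermost derivation starts from `t`. -/
def InnTerminates (R : List (Rule F V)) (t : Term F V) : Prop :=
  ¬ ∃ f : ℕ → Term F V, f 0 = t ∧ ∀ n, InnStep R (f n) (f (n + 1))

/-- No infinite outermost derivation starts from `t`. -/
def OutTerminates (R : List (Rule F V)) (t : Term F V) : Prop :=
  ¬ ∃ f : ℕ → Term F V, f 0 = t ∧ ∀ n, OutStep R (f n) (f (n + 1))

def Unifies (σ : V → Term F V) (u v : Term F V) : Prop := subst σ u = subst σ v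

/-- `σ` is a most general unifier of `u` and `v`. -/
def IsMGU (u v : Term F V) (σ : V → Term F V) : Prop :=
  Unifies σ u v ∧
    ∀ τ : V → Term F V, Unifies τ u v → ∃ ρ : V → Term F V, ∀ x, subst ρ (σ x) = τ x

/-- The usable rules of a term (least set closed under the defining equations). -/
inductive Usable (R : List (Rule F V)) (XA : Set V) : Term F V → Rule F V → Prop
  | var {x : V} {ρ : Rule F V} : x ∉ XA → ρ ∈ R → Usable R XA (Term.var x) ρ
  | rls {f : F} {ts : List (Term F V)} {ρ : Rule F V} :
      ρ ∈ R → Term.top ρ.lhs = some f → Usable R XA (Term.app f ts) ρ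
  | arg {f : F} {ts : List (Term F V)} {t : Term F V} {ρ : Rule F V} :
      t ∈ ts → Usable R XA t ρ → Usable R XA (Term.app f ts) ρ
  | rhs {f : F} {ts : List (Term F V)} {ρ' ρ : Rule F V} :
      ρ' ∈ R → Term.top ρ'.lhs = some f → Usable R XA ρ'.rhs ρ → Usable R XA (Term.app f ts) ρ


section Aux
variable {F V : Type*}
open Term

theorem substList_eq_map (σ : V → Term F V) (us : List (Term F V)) :
    substList σ us = us.map (subst σ) := by
  induction us with
  | nil => rfl
  | cons u us ih => simp [substList, ih]

theorem vars_subset_varsList {u : Term F V} {us : List (Term F V)} (h : u ∈ us) :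
    vars u ⊆ varsList us := by
  induction us with
  | nil => cases h
  | cons v vs ih =>
    rcases List.mem_cons.1 h with h | h
    · subst h; exact fun x hx => Or.inl hx
    · exact fun x hx => Or.inr (ih h hx)

mutual
theorem var_pos {x : V} : ∀ u : Term F V, x ∈ vars u → ∃ o, subtermAt o u = some (.var x)
  | .var y, h => by
      simp only [vars, Set.mem_singleton_iff] at h
      exact ⟨[], by simp [subtermAt, h]⟩
  | .app f us, h => by
      obtain ⟨i, ui, o, hi, ho⟩ := var_pos_list us h
      exact ⟨i :: o, by simp [subtermAt, hi, ho]⟩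

theorem var_pos_list {x : V} : ∀ us : List (Term F V), x ∈ varsList us →
    ∃ (i : ℕ) (ui : Term F V) (o : List ℕ), us[i]? = some ui ∧ subtermAt o ui = some (.var x)
  | [], h => by simp [varsList] at h
  | u :: us, h => by
      rcases h with h | h
      · obtain ⟨o, ho⟩ := var_pos u h
        exact ⟨0, u, o, by simp, ho⟩
      · obtain ⟨i, ui, o, hi, ho⟩ := var_pos_list us h
        exact ⟨i + 1, ui, o, by simpa using hi, ho⟩
end

theorem subtermAt_append (q o : List ℕ) : ∀ s : Term F V,
    subtermAt (q ++ o) s = (subtermAt q s).bind (subtermAt o) := by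
  induction q with
  | nil => intro s; simp [subtermAt]
  | cons i q ih =>
    intro s
    cases s with
    | var x => simp [subtermAt]
    | app f ts =>
      cases h : ts[i]? with
      | none => simp [subtermAt, h]
      | some u => simp [subtermAt, h, ih]

theorem subtermAt_subst {o : List ℕ} (τ : V → Term F V) :
    ∀ {u w : Term F V}, subtermAt o u = some w →
      subtermAt o (subst τ u) = some (subst τ w) := by
  induction o with
  | nil => intro u w h; simp_all [subtermAt]
  | cons i o ih =>
    intro u w h
    cases u with
    | var x => simp [subtermAt] at h
    | app f us =>
      cases hu : us[i]? with
      | none => simp [subtermAt, hu] at h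
      | some ui =>
        simp only [subtermAt, hu] at h
        simp [subst, subtermAt, substList_eq_map, hu, ih h]

theorem replaceAt_isSome {p : List ℕ} : ∀ {s w : Term F V}, subtermAt p s = some w →
    ∀ u, ∃ s', replaceAt p s u = some s' := by
  induction p with
  | nil => intro s w _ u; exact ⟨u, rfl⟩
  | cons i p ih =>
    intro s w h u
    cases s with
    | var x => simp [subtermAt] at h
    | app f ts =>
      cases hu : ts[i]? with
      | none => simp [subtermAt, hu] at h
      | some ti =>
        simp only [subtermAt, hu] at h
        obtain ⟨ti', hti'⟩ := ih h u
        exact ⟨.app f (ts.set i ti'), by simp [replaceAt, hu, hti']⟩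

theorem subtermAt_replaceAt {p : List ℕ} : ∀ {s u s' : Term F V},
    replaceAt p s u = some s' → subtermAt p s' = some u := by
  induction p with
  | nil => intro s u s' h; simp only [replaceAt, Option.some.injEq] at h; simp [subtermAt, h]
  | cons i p ih =>
    intro s u s' h
    cases s with
    | var x => simp [replaceAt] at h
    | app f ts =>
      cases hu : ts[i]? with
      | none => simp [replaceAt, hu] at h
      | some ti =>
        simp only [replaceAt, hu] at h
        cases hr : replaceAt p ti u with
        | none => simp [hr] at h
        | some ti' =>
          simp only [hr, Option.some.injEq] at h
          subst h
          have hlen : i < ts.length := (List.getElem?_eq_some_iff.1 hu).1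
          simp [subtermAt, List.getElem?_set_eq_of_lt _ hlen, ih hr]

theorem replaceAt_decomp {q o : List ℕ} : ∀ {s : Term F V} {u s' : Term F V},
    replaceAt (q ++ o) s u = some s' →
    ∃ w w', subtermAt q s = some w ∧ replaceAt o w u = some w' ∧ replaceAt q s w' = some s' := by
  induction q with
  | nil => intro s u s' h; exact ⟨s, s', rfl, h, rfl⟩
  | cons i q ih =>
    intro s u s' h
    cases s with
    | var x => simp [replaceAt] at h
    | app f ts =>
      cases hu : ts[i]? with
      | none => simp [replaceAt, hu] at h
      | some ti =>
        simp only [List.cons_append, replaceAt, hu, List.append_eq] at h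
        cases hr : replaceAt (q ++ o) ti u with
        | none => rw [hr] at h; simp at h
        | some ti' =>
          rw [hr] at h
          simp only [Option.some.injEq] at h
          obtain ⟨w, w', hw, hw', hrw⟩ := ih hr
          exact ⟨w, w', by simp [subtermAt, hu, hw], hw',
            by simp [replaceAt, hu, hrw, h]⟩

theorem subtermAt_replaceAt_incomp {p : List ℕ} : ∀ {q : List ℕ} {s u s' : Term F V},
    replaceAt p s u = some s' → ¬ p <+: q → ¬ q <+: p →
    subtermAt q s' = subtermAt q s := by
  induction p with
  | nil => intro q s u s' _ h1 _; exact absurd (List.nil_prefix) h1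
  | cons i p ih =>
    intro q s u s' h h1 h2
    cases s with
    | var x => simp [replaceAt] at h
    | app f ts =>
      cases hu : ts[i]? with
      | none => simp [replaceAt, hu] at h
      | some ti =>
        simp only [replaceAt, hu] at h
        cases hr : replaceAt p ti u with
        | none => simp [hr] at h
        | some ti' =>
          simp only [hr, Option.some.injEq] at h
          subst h
          cases q with
          | nil => exact absurd List.nil_prefix h2
          | cons j q =>
            by_cases hij : j = i
            · subst hij
              have hlen : j < ts.length := (List.getElem?_eq_some_iff.1 hu).1
              have := ih hr (fun hp => h1 (List.cons_prefix_cons.2 ⟨rfl, hp⟩))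
                (fun hp => h2 (List.cons_prefix_cons.2 ⟨rfl, hp⟩))
              simp [subtermAt, List.getElem?_set_eq_of_lt _ hlen, hu, this]
            · simp [subtermAt, List.getElem?_set_ne (show i ≠ j from fun hh => hij hh.symm)]


theorem reducibleAt_iff {R : List (Rule F V)} {s : Term F V} {p : List ℕ} :
    ReducibleAt R s p ↔ ∃ w, subtermAt p s = some w ∧ ∃ ρ ∈ R, ∃ τ, w = subst τ ρ.lhs := by
  constructor
  · rintro ⟨t', ρ, hρ, τ, hsub, -⟩
    exact ⟨subst τ ρ.lhs, hsub, ρ, hρ, τ, rfl⟩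
  · rintro ⟨w, hw, ρ, hρ, τ, rfl⟩
    obtain ⟨s', hs'⟩ := replaceAt_isSome hw (subst τ ρ.rhs)
    exact ⟨s', ρ, hρ, τ, hw, hs'⟩

theorem reducible_iff {R : List (Rule F V)} {w : Term F V} :
    Reducible R w ↔ ∃ o, ReducibleAt R w o := by
  constructor
  · rintro ⟨t, o, h⟩; exact ⟨o, t, h⟩
  · rintro ⟨o, t, h⟩; exact ⟨t, o, h⟩

theorem reducibleAt_lift {R : List (Rule F V)} {q o : List ℕ} {s w : Term F V}
    (hs : subtermAt q s = some w) (h : ReducibleAt R w o) : ReducibleAt R s (q ++ o) := by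
  obtain ⟨w', hw', hrr⟩ := reducibleAt_iff.1 h
  exact reducibleAt_iff.2 ⟨w', by rw [subtermAt_append, hs]; exact hw', hrr⟩

theorem reducibleAt_unlift {R : List (Rule F V)} {q o : List ℕ} {s w : Term F V}
    (hs : subtermAt q s = some w) (h : ReducibleAt R s (q ++ o)) : ReducibleAt R w o := by
  obtain ⟨w', hw', hrr⟩ := reducibleAt_iff.1 h
  rw [subtermAt_append, hs] at hw'
  exact reducibleAt_iff.2 ⟨w', hw', hrr⟩

theorem normalForm_subterm {R : List (Rule F V)} {s w : Term F V} {q : List ℕ}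
    (h : NormalForm R s) (hs : subtermAt q s = some w) : NormalForm R w := by
  intro hred
  obtain ⟨o, ho⟩ := reducible_iff.1 hred
  exact h (reducible_iff.2 ⟨q ++ o, reducibleAt_lift hs ho⟩)

theorem subterm_subst {q : List ℕ} : ∀ {u : Term F V} {τ : V → Term F V} {w : Term F V},
    subtermAt q (subst τ u) = some w →
    (∀ g ts, w = Term.app g ts → Occurs g u) ∨ ∃ x ∈ vars u, ∃ o, subtermAt o (τ x) = some w := by
  induction q with
  | nil =>
    intro u τ w h
    simp only [subtermAt, Option.some.injEq] at h
    cases u with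
    | var x => exact Or.inr ⟨x, rfl, [], by rw [subst] at h; simp [subtermAt, h]⟩
    | app f us =>
      refine Or.inl fun g ts hw => ?_
      rw [← h, subst] at hw
      cases hw
      exact Occurs.head _
  | cons i q ih =>
    intro u τ w h
    cases u with
    | var x => exact Or.inr ⟨x, rfl, i :: q, h⟩
    | app f us =>
      rw [subst] at h
      rw [substList_eq_map] at h
      cases hu : us[i]? with
      | none => simp [subtermAt, hu] at h
      | some ui =>
        simp only [subtermAt, List.getElem?_map, hu, Option.map_some] at h
        have hmem : ui ∈ us := List.mem_of_getElem? hu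
        rcases ih h with h' | ⟨x, hx, o, ho⟩
        · exact Or.inl fun g ts hw => Occurs.arg hmem (h' g ts hw)
        · exact Or.inr ⟨x, vars_subset_varsList hmem hx, o, ho⟩

end Aux

/-- along any innermost rewrite chain
`αt →inn_{p₁,l₁→r₁} t₁ →inn … →inn_{pₙ,lₙ→rₙ} tₙ` starting from a ground normalized
instance `αt` of a term `t` all of whose variables are abstraction variables,
the function symbol at any redex position of `t_k` (1 ≤ k ≤ n) occurs in `t`
or in one of the right-hand sides `r₁,…,r_k`. -/
theorem redex_symbols {F V : Type*}
    (R : List (Rule F V)) (hRS : IsRS R) (XA : Set V)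
    (t : Term F V) (ht : vars t ⊆ XA)
    (α : V → Term F V)
    -- `Var(t) ⊆ Dom(α)` and `α` is ground and normalized
    (hdom : ∀ x ∈ vars t, α x ≠ Term.var x)
    (hα : ∀ x : V, α x ≠ Term.var x → IsGround (α x) ∧ NormalForm R (α x))
    (n : ℕ) (terms : ℕ → Term F V) (pos : ℕ → List ℕ) (rules : ℕ → Rule F V)
    (h0 : terms 0 = subst α t)
    (hchain : ∀ i < n, rules i ∈ R ∧
        InnAtWith R (rules i).lhs (rules i).rhs (pos i) (terms i) (terms (i + 1))) :
    ∀ k, 1 ≤ k → k ≤ n → ∀ (q : List ℕ) (g : F) (ts : List (Term F V)),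
      subtermAt q (terms k) = some (Term.app g ts) →
      ReducibleAt R (terms k) q →
      Term.Occurs g t ∨ ∃ i < k, Term.Occurs g (rules i).rhs := by
  have hkey : ∀ k, k ≤ n → ∀ (q : List ℕ) (g : F) (ts : List (Term F V)),
      subtermAt q (terms k) = some (Term.app g ts) →
      Occurs g t ∨ (∃ i < k, Occurs g (rules i).rhs) ∨ NormalForm R (Term.app g ts) := by
    intro k
    induction k with
    | zero =>
      intro _ q g ts hq
      rw [h0] at hq
      rcases subterm_subst hq with h' | ⟨x, hx, o, ho⟩
      · exact Or.inl (h' g ts rfl)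
      · exact Or.inr (Or.inr (normalForm_subterm (hα x (hdom x hx)).2 ho))
    | succ k ih =>
      intro hk q g ts hq
      have hkn : k < n := hk
      obtain ⟨hρ, ⟨τ, hsub, hrep⟩, hinn⟩ := hchain k hkn
      by_cases hpq : pos k <+: q
      · -- q is at or below the rewrite position
        obtain ⟨q', rfl⟩ := hpq
        have h1 : subtermAt (pos k) (terms (k+1)) = some (subst τ (rules k).rhs) :=
          subtermAt_replaceAt hrep
        rw [subtermAt_append, h1, Option.bind_some] at hq
        rcases subterm_subst hq with h' | ⟨x, hx, o, ho⟩
        · exact Or.inr (Or.inl ⟨k, Nat.lt_succ_self k, h' g ts rfl⟩)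
        · have hxl : x ∈ vars (rules k).lhs := (hRS _ hρ).2 hx
          cases hl : (rules k).lhs with
          | var y => exact absurd hl ((hRS _ hρ).1 y)
          | app f ls =>
            obtain ⟨o₁, ho₁⟩ := var_pos _ (hl ▸ hxl)
            have ho₁ne : o₁ ≠ [] := by
              rintro rfl
              simp [subtermAt] at ho₁
            have h2 : subtermAt o₁ (subst τ (rules k).lhs) = some (τ x) := by
              rw [hl]
              have := subtermAt_subst τ ho₁
              simpa [subst] using this
            have h3 : subtermAt (pos k ++ (o₁ ++ o)) (terms k) = some (Term.app g ts) := by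
              rw [subtermAt_append, hsub, Option.bind_some, subtermAt_append, h2,
                Option.bind_some]
              exact ho
            refine Or.inr (Or.inr ?_)
            intro hred
            obtain ⟨o₂, ho₂⟩ := reducible_iff.1 hred
            have hlift := reducibleAt_lift h3 ho₂
            refine hinn ((pos k ++ (o₁ ++ o)) ++ o₂) ⟨⟨(o₁ ++ o) ++ o₂, by simp⟩, ?_⟩ hlift
            intro hcontra
            have hlen := congrArg List.length hcontra
            simp only [List.length_append] at hlen
            have : o₁.length = 0 := by omega
            exact ho₁ne (List.eq_nil_of_length_eq_zero this)
      · by_cases hqp : q <+: pos k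
        · -- q strictly above the rewrite position
          obtain ⟨o, hpo⟩ := hqp
          have hone : o ≠ [] := by
            rintro rfl
            exact hpq (by simp [← hpo])
          obtain ⟨w, w', hw, hw', hrw⟩ := replaceAt_decomp (hpo ▸ hrep)
          have hq' : subtermAt q (terms (k+1)) = some w' := subtermAt_replaceAt hrw
          cases o with
          | nil => exact absurd rfl hone
          | cons j o₁ =>
            cases w with
            | var y => simp [replaceAt] at hw'
            | app h ws =>
              have hw'shape : ∃ ws', w' = Term.app h ws' := by
                simp only [replaceAt] at hw'
                split at hw'
                · exact absurd hw' (by simp)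
                · split at hw'
                  · exact absurd hw' (by simp)
                  · injection hw' with hw''
                    exact ⟨_, hw''.symm⟩
              obtain ⟨ws', rfl⟩ := hw'shape
              rw [hq'] at hq
              injection hq with hq
              injection hq with hg hts
              subst hg
              rcases ih (Nat.le_of_succ_le hk) q h ws hw with h' | ⟨i, hi, h'⟩ | h'
              · exact Or.inl h'
              · exact Or.inr (Or.inl ⟨i, Nat.lt_succ_of_lt hi, h'⟩)
              · exfalso
                have hredp : ReducibleAt R (terms k) (pos k) :=
                  ⟨terms (k+1), rules k, hρ, τ, hsub, hrep⟩
                rw [← hpo] at hredp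
                have := reducibleAt_unlift hw hredp
                exact h' (reducible_iff.2 ⟨_, this⟩)
        · -- incomparable positions
          have heq := subtermAt_replaceAt_incomp hrep hpq hqp
          rw [heq] at hq
          rcases ih (Nat.le_of_succ_le hk) q g ts hq with h' | ⟨i, hi, h'⟩ | h'
          · exact Or.inl h'
          · exact Or.inr (Or.inl ⟨i, Nat.lt_succ_of_lt hi, h'⟩)
          · exact Or.inr (Or.inr h')
  intro k _ hkn q g ts hq hred
  rcases hkey k hkn q g ts hq with h | h | h
  · exact Or.inl h
  · exact Or.inr h
  · exfalso
    obtain ⟨w, hw, ρ, hρ, τ, hwe⟩ := reducibleAt_iff.1 hred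
    rw [hq] at hw
    injection hw with hw
    apply h
    refine ⟨subst τ ρ.rhs, [], ρ, hρ, τ, ?_, rfl⟩
    rw [show subtermAt [] (Term.app g ts) = some (Term.app g ts) from rfl, hw, hwe]

end TRS
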